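/- Suppose 0 < x₁ < x₂, and for i = 1, 2 let yᵢ be the unique real number with yᵢ ≠ xᵢ and h(yᵢ) = h(xᵢ) + h′(xᵢ)·(yᵢ − xᵢ) (the second intersection of the tangent line at xᵢ with the graph of h). Then y₂ < y₁ < 0 and x₂ − y₂ > x₁ − y₁ > x₁; that is, the second-intersection function f(x) = y is strictly decreasing and the gap function A(x) = x − f(x) is strictly increasing and satisfies A(x) > x for x > 0. -/

import Mathlib

/-!
Write `D_x(t) = h(t) - h(x) - h'(x) (t - x)` for the defect of the tangent at `x`. Its
`t`-derivative is `h'(t) - h'(x)`, and `h' = -1/cosh` is increasing in `|t|`; so for `x > 0`,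
`D_x` decreases on `[-x, x]` and increases on `[x, ∞)` and on `(-∞, -x]`. Thus `D_x > 0` on
`[-x, ∞)` away from `x`, and the second intersection satisfies `f(x) < -x`. For `x₁ < x₂`,
`D_{x₁}(t) = D_{x₂}(t) - D_{x₂}(x₁) + (h'(x₂) - h'(x₁)) (t - x₁)` is negative at `t = f(x₂)`,
where `D_{x₂}` vanishes, so `D_{x₁}(f(x₂)) < 0 = D_{x₁}(f(x₁))`, and monotonicity of `D_{x₁}`
on `(-∞, -x₁]` gives `f(x₂) < f(x₁)`.
-/

/-- The hill function `h(x) = arccos(tanh x)`. -/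
noncomputable def hill (x : ℝ) : ℝ := Real.arccos (Real.tanh x)

/-- The derivative of the hill function: `h'(x) = -1/cosh x`. -/
noncomputable def hill' (x : ℝ) : ℝ := -1 / Real.cosh x

open Real Set

lemma Real.one_sub_tanh_sq (x : ℝ) : 1 - tanh x ^ 2 = (cosh x ^ 2)⁻¹ := by
  have := cosh_pos x
  rw [tanh_eq_sinh_div_cosh]
  field_simp
  linarith [cosh_sq_sub_sinh_sq x]

lemma Real.hasDerivAt_tanh (x : ℝ) : HasDerivAt tanh (cosh x ^ 2)⁻¹ x := by
  have hc := (cosh_pos x).ne'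
  have h := (hasDerivAt_sinh x).div (hasDerivAt_cosh x) hc
  rw [← sq, ← sq, cosh_sq_sub_sinh_sq, one_div] at h
  rwa [show tanh = sinh / cosh from funext tanh_eq_sinh_div_cosh]

lemma hasDerivAt_hill (x : ℝ) : HasDerivAt hill (hill' x) x := by
  have h := (hasDerivAt_arccos (neg_one_lt_tanh x).ne' (tanh_lt_one x).ne).comp x
    (hasDerivAt_tanh x)
  rw [one_sub_tanh_sq, sqrt_inv, sqrt_sq (cosh_pos x).le] at h
  refine h.congr_deriv ?_
  rw [hill']
  field_simp

lemma hill'_lt_hill'_iff {a b : ℝ} : hill' a < hill' b ↔ |a| < |b| := by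
  rw [hill', hill', neg_div, neg_div, neg_lt_neg_iff, one_div_lt_one_div (cosh_pos b) (cosh_pos a),
    cosh_lt_cosh]

def tangentDefect (f f' : ℝ → ℝ) (x t : ℝ) : ℝ := f t - (f x + f' x * (t - x))

@[simp]
lemma tangentDefect_self (f f' : ℝ → ℝ) (x : ℝ) : tangentDefect f f' x x = 0 := by
  simp [tangentDefect]

lemma tangentDefect_eq_zero_iff {f f' : ℝ → ℝ} {x t : ℝ} :
    tangentDefect f f' x t = 0 ↔ f t = f x + f' x * (t - x) :=
  sub_eq_zero

lemma tangentDefect_eq_sub_add (f f' : ℝ → ℝ) (x₁ x₂ t : ℝ) :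
    tangentDefect f f' x₁ t =
      tangentDefect f f' x₂ t - tangentDefect f f' x₂ x₁ +
        (f' x₂ - f' x₁) * (t - x₁) := by
  simp only [tangentDefect]
  ring

lemma hasDerivAt_tangentDefect {f f' : ℝ → ℝ} (hf : ∀ t, HasDerivAt f (f' t) t)
    (x t : ℝ) :
    HasDerivAt (tangentDefect f f' x) (f' t - f' x) t := by
  have htangent := (((hasDerivAt_id t).sub_const x).const_mul (f' x)).const_add (f x)
  exact ((hf t).sub htangent).congr_deriv (by ring)

lemma continuous_tangentDefect {f f' : ℝ → ℝ} (hf : ∀ t, HasDerivAt f (f' t) t) (x : ℝ) :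
    Continuous (tangentDefect f f' x) :=
  continuous_iff_continuousAt.2 fun t => (hasDerivAt_tangentDefect hf x t).continuousAt

lemma strictMonoOn_tangentDefect {f f' : ℝ → ℝ} (hf : ∀ t, HasDerivAt f (f' t) t)
    {x : ℝ} {s : Set ℝ} (hs : Convex ℝ s)
    (hslope : ∀ t ∈ interior s, f' x < f' t) : StrictMonoOn (tangentDefect f f' x) s :=
  strictMonoOn_of_hasDerivWithinAt_pos hs (continuous_tangentDefect hf x).continuousOn
    (fun t _ => (hasDerivAt_tangentDefect hf x t).hasDerivWithinAt)
    (fun t ht => sub_pos.2 (hslope t ht))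

lemma strictAntiOn_tangentDefect {f f' : ℝ → ℝ} (hf : ∀ t, HasDerivAt f (f' t) t)
    {x : ℝ} {s : Set ℝ} (hs : Convex ℝ s)
    (hslope : ∀ t ∈ interior s, f' t < f' x) : StrictAntiOn (tangentDefect f f' x) s :=
  strictAntiOn_of_hasDerivWithinAt_neg hs (continuous_tangentDefect hf x).continuousOn
    (fun t _ => (hasDerivAt_tangentDefect hf x t).hasDerivWithinAt)
    (fun t ht => sub_neg.2 (hslope t ht))

lemma tangentDefect_hill_pos {x t : ℝ} (hx : 0 < x) (ht : -x ≤ t) (hne : t ≠ x) :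
    0 < tangentDefect hill hill' x t := by
  rcases hne.lt_or_gt with hlt | hgt
  · have hanti : StrictAntiOn (tangentDefect hill hill' x) (Icc (-x) x) :=
      strictAntiOn_tangentDefect hasDerivAt_hill (convex_Icc _ _) fun s hs => by
        rw [interior_Icc] at hs
        rw [hill'_lt_hill'_iff, abs_of_pos hx]
        exact abs_lt.2 hs
    simpa using hanti ⟨ht, hlt.le⟩ ⟨by linarith, le_rfl⟩ hlt
  · have hmono : StrictMonoOn (tangentDefect hill hill' x) (Ici x) :=
      strictMonoOn_tangentDefect hasDerivAt_hill (convex_Ici _) fun s hs => by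
        rw [interior_Ici] at hs
        rw [hill'_lt_hill'_iff, abs_of_pos hx, abs_of_pos (hx.trans hs)]
        exact hs
    simpa using hmono (mem_Ici.2 le_rfl) (mem_Ici.2 hgt.le) hgt

lemma strictMonoOn_tangentDefect_hill_Iic {x : ℝ} (hx : 0 < x) :
    StrictMonoOn (tangentDefect hill hill' x) (Iic (-x)) :=
  strictMonoOn_tangentDefect hasDerivAt_hill (convex_Iic _) fun s hs => by
    rw [interior_Iic, mem_Iio] at hs
    rw [hill'_lt_hill'_iff, abs_of_pos hx, abs_of_neg (by linarith)]
    linarith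

lemma lt_neg_of_tangentDefect_hill_eq_zero {x y : ℝ} (hx : 0 < x) (hne : y ≠ x)
    (hy : tangentDefect hill hill' x y = 0) : y < -x := by
  by_contra! h
  exact (tangentDefect_hill_pos hx h hne).ne' hy

/-- If `0 < x₁ < x₂` and `yᵢ` is the second intersection of the tangent line at `xᵢ`
with the graph of the hill function, then `y₂ < y₁ < 0` and
`x₂ - y₂ > x₁ - y₁ > x₁`: the second-intersection function `f` is strictly
decreasing and the gap function `A(x) = x - f(x)` is strictly increasing with `A(x) > x`. -/
theorem hill_tangent_gap_monotone {x₁ x₂ y₁ y₂ : ℝ}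
    (hx₁ : 0 < x₁) (hx₁₂ : x₁ < x₂)
    (hy₁ne : y₁ ≠ x₁) (hy₁ : hill y₁ = hill x₁ + hill' x₁ * (y₁ - x₁))
    (hy₂ne : y₂ ≠ x₂) (hy₂ : hill y₂ = hill x₂ + hill' x₂ * (y₂ - x₂)) :
    y₂ < y₁ ∧ y₁ < 0 ∧ x₁ - y₁ < x₂ - y₂ ∧ x₁ < x₁ - y₁ := by
  rw [← tangentDefect_eq_zero_iff] at hy₁ hy₂
  have hx₂ : 0 < x₂ := hx₁.trans hx₁₂
  have hy₁x₁ : y₁ < -x₁ := lt_neg_of_tangentDefect_hill_eq_zero hx₁ hy₁ne hy₁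
  have hy₂x₂ : y₂ < -x₂ := lt_neg_of_tangentDefect_hill_eq_zero hx₂ hy₂ne hy₂
  have hdefect : 0 < tangentDefect hill hill' x₂ x₁ :=
    tangentDefect_hill_pos hx₂ (by linarith) hx₁₂.ne
  have hslope : hill' x₁ < hill' x₂ := by
    rwa [hill'_lt_hill'_iff, abs_of_pos hx₁, abs_of_pos hx₂]
  have hneg : tangentDefect hill hill' x₁ y₂ < tangentDefect hill hill' x₁ y₁ := by
    rw [tangentDefect_eq_sub_add hill hill' x₁ x₂, hy₂, hy₁]
    nlinarith
  have hy : y₂ < y₁ :=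
    ((strictMonoOn_tangentDefect_hill_Iic hx₁).lt_iff_lt (show y₂ ≤ -x₁ by linarith)
      hy₁x₁.le).1 hneg
  exact ⟨hy, by linarith, by linarith, by linarith⟩
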